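/- For every τ ∈ (0, 1/4), with a₁(τ) < b₁(τ) the two real roots of q₁ and b_*(τ) = (3(1−4τ))^{−1/3} the root of q₂, one has b₁(τ) ≤ b_*(τ), with equality if and only if τ = 1/12. -/
import Mathlib

noncomputable section

/-- The constant `c = −(243(1−4τ)²/64)^{1/3}` (real cube root). -/
def ccf (τ : ℝ) : ℝ := -(243 * (1 - 4 * τ) ^ 2 / 64) ^ ((1 : ℝ) / 3)

/-- `R(z) = 3z⁴ − 3z − c`. -/
def RR (τ : ℝ) (z : ℂ) : ℂ := 3 * z ^ 4 - 3 * z - (ccf τ : ℂ)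

/-- `D(z) = −2z⁶ + 3z³ + cz² − 3τ`. -/
def DD (τ : ℝ) (z : ℂ) : ℂ :=
  -2 * z ^ 6 + 3 * z ^ 3 + (ccf τ : ℂ) * z ^ 2 - 3 * (τ : ℂ)

/-- The quartic `q₁`. -/
def q1 (τ : ℝ) (z : ℂ) : ℂ :=
  ((256 / (3 : ℝ) ^ ((5 : ℝ) / 3) * (1 - 4 * τ) ^ ((1 : ℝ) / 3) : ℝ) : ℂ) * z ^ 4
    + (128 / 9 : ℂ) * z ^ 3
    + ((16 / (3 : ℝ) ^ ((1 : ℝ) / 3) * (1 - 4 * τ) ^ ((2 : ℝ) / 3) : ℝ) : ℂ) * z ^ 2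
    - ((32 * (3 : ℝ) ^ ((1 : ℝ) / 3) * (1 - 4 * τ) ^ ((1 : ℝ) / 3) : ℝ) : ℂ) * z
    + ((16 * (1 - 8 * τ) : ℝ) : ℂ)

/-- The linear factor `q₂`. -/
def q2 (τ : ℝ) (z : ℂ) : ℂ :=
  (((3 : ℝ) ^ ((1 : ℝ) / 3) * (1 - 4 * τ) ^ ((1 : ℝ) / 3) : ℝ) : ℂ) * z - 1

/-- The double point `b_* = (3(1−4τ))^{−1/3}`. -/
def bstar (τ : ℝ) : ℝ := (3 * (1 - 4 * τ)) ^ (-(1 : ℝ) / 3)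

/-! ### Auxiliary machinery -/

/-- The real-valued version of `q1` on the real line. -/
def pr (τ x : ℝ) : ℝ :=
  256 / (3 : ℝ) ^ ((5 : ℝ) / 3) * (1 - 4 * τ) ^ ((1 : ℝ) / 3) * x ^ 4
    + 128 / 9 * x ^ 3
    + 16 / (3 : ℝ) ^ ((1 : ℝ) / 3) * (1 - 4 * τ) ^ ((2 : ℝ) / 3) * x ^ 2
    - 32 * (3 : ℝ) ^ ((1 : ℝ) / 3) * (1 - 4 * τ) ^ ((1 : ℝ) / 3) * x
    + 16 * (1 - 8 * τ)

/-- `s = 3^{1/3}`. -/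
def sc : ℝ := (3 : ℝ) ^ ((1 : ℝ) / 3)

/-- `t = (1-4τ)^{1/3}`. -/
def tc (τ : ℝ) : ℝ := (1 - 4 * τ) ^ ((1 : ℝ) / 3)

lemma sc_pos : 0 < sc := Real.rpow_pos_of_pos (by norm_num) _

lemma sc_cube : sc ^ 3 = 3 := by
  rw [sc, ← Real.rpow_natCast ((3:ℝ) ^ ((1:ℝ)/3)) 3, ← Real.rpow_mul (by norm_num)]
  norm_num

lemma tc_pos {τ : ℝ} (hu : 0 < 1 - 4 * τ) : 0 < tc τ := Real.rpow_pos_of_pos hu _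

lemma tc_cube {τ : ℝ} (hu : 0 < 1 - 4 * τ) : tc τ ^ 3 = 1 - 4 * τ := by
  rw [tc, ← Real.rpow_natCast ((1 - 4*τ) ^ ((1:ℝ)/3)) 3, ← Real.rpow_mul hu.le]
  norm_num

lemma q1_eq (τ x : ℝ) : q1 τ ((x : ℝ) : ℂ) = ((pr τ x : ℝ) : ℂ) := by
  unfold q1 pr; push_cast; ring

/-- abstract key identity -/
lemma key_identity (s t x τ : ℝ) (hs3 : s ^ 3 = 3) (ht3 : t ^ 3 = 1 - 4 * τ) :
    93312 * (1 - 4 * τ) *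
      (256 / 9 * s * t * x ^ 4 + 128 / 9 * x ^ 3 + 16 / 3 * s ^ 2 * t ^ 2 * x ^ 2
        - 32 * (s * t * x) + 16 * (1 - 8 * τ))
    = (1728 * (1 - 4 * τ) + 144 * ((s * t * x) ^ 2 - 6 * (s * t * x) - 3)) ^ 2
      + 6912 * (s * t * x - 1) * (5 * (s * t * x) + 3) ^ 3 := by
  linear_combination (-442368 * t ^ 3 * x ^ 3 - 884736 * s * t ^ 4 * x ^ 4) * hs3
    + (-1327104 * x ^ 3 - 2654208 * s * t * x ^ 4) * ht3

lemma pr_poly (τ x : ℝ) (hu : 0 < 1 - 4 * τ) :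
    pr τ x = 256 / 9 * sc * tc τ * x ^ 4 + 128 / 9 * x ^ 3
      + 16 / 3 * sc ^ 2 * tc τ ^ 2 * x ^ 2 - 32 * (sc * tc τ * x) + 16 * (1 - 8 * τ) := by
  have h53 : (3 : ℝ) ^ ((5 : ℝ) / 3) = 9 / sc := by
    rw [eq_div_iff sc_pos.ne', sc, ← Real.rpow_add (by norm_num : (0:ℝ) < 3),
      show (5:ℝ)/3 + 1/3 = ((2:ℕ):ℝ) by norm_num, Real.rpow_natCast]
    norm_num
  have h23 : (1 - 4 * τ) ^ ((2 : ℝ) / 3) = tc τ ^ 2 := by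
    rw [tc, ← Real.rpow_natCast ((1 - 4*τ) ^ ((1:ℝ)/3)) 2, ← Real.rpow_mul hu.le]
    norm_num
  unfold pr
  rw [h53, h23, show (3:ℝ) ^ ((1:ℝ)/3) = sc from rfl,
    show (1 - 4*τ) ^ ((1:ℝ)/3) = tc τ from rfl]
  rw [div_div_eq_mul_div, show (16:ℝ)/sc = 16/3*sc^2 by
    rw [div_eq_iff sc_pos.ne']; linear_combination (-16/3)*sc_cube]
  ring

lemma bstar_eq {τ : ℝ} (hu : 0 < 1 - 4 * τ) : bstar τ = (sc * tc τ)⁻¹ := by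
  rw [bstar, show (-(1:ℝ)/3) = -((1:ℝ)/3) by norm_num,
    Real.rpow_neg (by positivity), Real.mul_rpow (by norm_num) hu.le]
  rfl

lemma bstar_pos {τ : ℝ} (hu : 0 < 1 - 4 * τ) : 0 < bstar τ := by
  rw [bstar_eq hu]; exact inv_pos.2 (mul_pos sc_pos (tc_pos hu))

lemma pr_key (τ x : ℝ) (hu : 0 < 1 - 4 * τ) :
    93312 * (1 - 4 * τ) * pr τ x
    = (1728 * (1 - 4 * τ) + 144 * ((x / bstar τ) ^ 2 - 6 * (x / bstar τ) - 3)) ^ 2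
      + 6912 * (x / bstar τ - 1) * (5 * (x / bstar τ) + 3) ^ 3 := by
  have hx : x / bstar τ = sc * tc τ * x := by
    rw [bstar_eq hu]
    field_simp
  rw [hx, pr_poly τ x hu]
  exact key_identity sc (tc τ) x τ sc_cube (tc_cube hu)

lemma q1_ne (τ x : ℝ) (hu : 0 < 1 - 4 * τ) (hx : bstar τ < x) : q1 τ ((x : ℝ) : ℂ) ≠ 0 := by
  rw [q1_eq]
  intro h
  have hp : pr τ x = 0 := by exact_mod_cast h
  have hkey := pr_key τ x hu
  rw [hp] at hkey
  have hw : 1 < x / bstar τ := (one_lt_div (bstar_pos hu)).2 hx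
  nlinarith [sq_nonneg (1728 * (1 - 4 * τ) + 144 * ((x / bstar τ) ^ 2 - 6 * (x / bstar τ) - 3)),
    mul_pos (sub_pos.2 hw) (pow_pos (by linarith : (0:ℝ) < 5 * (x / bstar τ) + 3) 3)]

lemma q1_bstar (τ : ℝ) (hu : 0 < 1 - 4 * τ) :
    q1 τ ((bstar τ : ℝ) : ℂ) = 0 ↔ τ = 1 / 12 := by
  rw [q1_eq, Complex.ofReal_eq_zero]
  have hd : bstar τ / bstar τ = 1 := div_self (bstar_pos hu).ne'
  have hkey := pr_key τ (bstar τ) hu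
  rw [hd] at hkey
  constructor
  · intro hp
    rw [hp] at hkey
    have h0 : (1728 * (1 - 4 * τ) + 144 * ((1:ℝ) ^ 2 - 6 * 1 - 3)) ^ 2 = 0 := by nlinarith
    have := pow_eq_zero_iff (n := 2) (by norm_num) |>.1 h0
    nlinarith [this]
  · intro ht
    rw [ht] at hkey ⊢
    nlinarith [hkey]

/-- For `τ ∈ (0, 1/4)`, with `a₁ < b₁` the two real roots of `q₁` and
`b_* = (3(1−4τ))^{−1/3}` the root of `q₂`, one has `b₁ ≤ b_*`, with equality iff `τ = 1/12`. -/
theorem b1_le_bstar (τ a₁ b₁ : ℝ) (hτ : τ ∈ Set.Ioo (0 : ℝ) (1 / 4))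
    (hab : a₁ < b₁) (ha : q1 τ ((a₁ : ℝ) : ℂ) = 0) (hb : q1 τ ((b₁ : ℝ) : ℂ) = 0)
    (honly : ∀ x : ℝ, q1 τ ((x : ℝ) : ℂ) = 0 → x = a₁ ∨ x = b₁) :
    b₁ ≤ bstar τ ∧ (b₁ = bstar τ ↔ τ = 1 / 12) := by
  obtain ⟨hτ0, hτ4⟩ := hτ
  have hu : 0 < 1 - 4 * τ := by linarith
  have h1 : b₁ ≤ bstar τ := by
    by_contra h
    push_neg at h
    exact q1_ne τ b₁ hu h hb
  refine ⟨h1, ?_, ?_⟩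
  · intro he
    rw [← q1_bstar τ hu, ← he]
    exact hb
  · intro ht
    have h0 : q1 τ ((bstar τ : ℝ) : ℂ) = 0 := (q1_bstar τ hu).2 ht
    rcases honly _ h0 with h | h
    · exfalso; linarith
    · exact h.symm
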